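/- With the Harper-type parameters below, for every real number α, every large X, and every odd prime p, one has 𝓝(p, α) · 𝓝(p, −α) ≥ 1. -/

import Mathlib

open Filter Finset

/-- `χ_{8p}(n)`: the Kronecker symbol `(8p/n)`. Since `8p ≡ 0 (mod 4)`, Mathlib's Jacobi
symbol `J(8p | n)` agrees with the Kronecker symbol `(8p/n)` for all `n ≥ 1`. -/
def chi8p (p n : ℕ) : ℤ := jacobiSym (8 * p) n

/-- `α_0 = log 2 / log X` and `α_i = 20^{i-1}/(log log X)²` for `i ≥ 1`. -/
noncomputable def alphaP (X : ℝ) : ℕ → ℝ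
  | 0 => Real.log 2 / Real.log X
  | i + 1 => 20 ^ i / (Real.log (Real.log X)) ^ 2

/-- `𝓘 = 1 + max {i : α_i ≤ 10^{-M}}`. -/
noncomputable def bigI (M : ℕ) (X : ℝ) : ℕ :=
  1 + sSup {i : ℕ | alphaP X i ≤ ((10 : ℝ) ^ M)⁻¹}

/-- `E_y(x) = ∑_{j=0}^{2⌈y⌉} x^j/j!`. -/
noncomputable def Efun (y x : ℝ) : ℝ :=
  ∑ j ∈ Finset.range (2 * ⌈y⌉₊ + 1), x ^ j / (j.factorial : ℝ)

/-- `𝓟_i(p) = ∑_{X^{α_{i-1}} < q ≤ X^{α_i}, q prime} χ_{8p}(q)/√q`. -/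
noncomputable def Pfun (X : ℝ) (p i : ℕ) : ℝ :=
  ∑ q ∈ (Finset.range (⌊X ^ alphaP X i⌋₊ + 1)).filter
      (fun q : ℕ => q.Prime ∧ X ^ alphaP X (i - 1) < (q : ℝ)),
    (chi8p p q : ℝ) / Real.sqrt q

/-- The length parameter `⌈e² k α_i^{-3/4}⌉`. -/
noncomputable def lenP (k X : ℝ) (i : ℕ) : ℕ :=
  ⌈Real.exp 2 * k * alphaP X i ^ (-(3 : ℝ) / 4)⌉₊

/-- `𝓝_i(p, a) = E_{e²k α_i^{-3/4}}(a 𝓟_i(p))`. -/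
noncomputable def Nfun (k X : ℝ) (p i : ℕ) (a : ℝ) : ℝ :=
  Efun (Real.exp 2 * k * alphaP X i ^ (-(3 : ℝ) / 4)) (a * Pfun X p i)

/-- `𝓝(p, a) = ∏_{i=1}^{𝓘} 𝓝_i(p, a)`. -/
noncomputable def NNfun (k : ℝ) (M : ℕ) (X : ℝ) (p : ℕ) (a : ℝ) : ℝ :=
  ∏ i ∈ Finset.Icc 1 (bigI M X), Nfun k X p i a

/-- `𝓠_i(p, k) = (12 max(9, 36k²) 𝓟_i(p) / ⌈e²k α_i^{-3/4}⌉)^{2⌈e²k α_i^{-3/4}⌉}`. -/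
noncomputable def Qfun (k X : ℝ) (p i : ℕ) : ℝ :=
  (12 * max 9 (36 * k ^ 2) * Pfun X p i / (lenP k X i : ℝ)) ^ (2 * lenP k X i)

/-! The product `𝓝(p, α) 𝓝(p, −α)` splits over `i` into factors `E_y(x) E_y(−x)` with `x = α 𝓟_i(p)`,
so it suffices that `g(x) = T(x) T(−x) ≥ 1` for every even-degree Taylor polynomial `T` of `exp`.
Writing `T = S + xᵐ/m!` with `S = T'` and `m` even, `g'(x) = xᵐ/m! · (S(x) − S(−x))`, which is
`≥ 0` for `x ≥ 0`; as `g` is even with `g(0) = 1`, this gives `g ≥ 1`. -/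

noncomputable def expPartialSum (m : ℕ) (x : ℝ) : ℝ :=
  ∑ j ∈ range m, x ^ j / (j.factorial : ℝ)

namespace expPartialSum

lemma succ (m : ℕ) (x : ℝ) :
    expPartialSum (m + 1) x = expPartialSum m x + x ^ m / (m.factorial : ℝ) :=
  sum_range_succ _ _

lemma succ_zero (m : ℕ) : expPartialSum (m + 1) 0 = 1 := by
  simp [expPartialSum, sum_range_succ']

lemma hasDerivAt_succ (m : ℕ) (x : ℝ) :
    HasDerivAt (expPartialSum (m + 1)) (expPartialSum m x) x := by
  have hterm : ∀ j ∈ range (m + 1), HasDerivAt (fun y : ℝ => y ^ j / (j.factorial : ℝ))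
      ((j : ℝ) * x ^ (j - 1) / (j.factorial : ℝ)) x :=
    fun j _ => (hasDerivAt_pow j x).div_const _
  refine (HasDerivAt.fun_sum hterm).congr_deriv ?_
  rw [sum_range_succ', expPartialSum]
  simp only [Nat.cast_zero, zero_mul, zero_div, add_zero]
  refine sum_congr rfl fun j _ => ?_
  rw [Nat.factorial_succ]
  push_cast
  field_simp

lemma neg_le {x : ℝ} (hx : 0 ≤ x) (m : ℕ) : expPartialSum m (-x) ≤ expPartialSum m x := by
  refine sum_le_sum fun j _ => div_le_div_of_nonneg_right ?_ (by positivity)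
  calc (-x) ^ j ≤ |(-x) ^ j| := le_abs_self _
    _ = x ^ j := by rw [abs_pow, abs_neg, abs_of_nonneg hx]

lemma hasDerivAt_mul_neg (m : ℕ) (x : ℝ) :
    HasDerivAt (fun z => expPartialSum (m + 1) z * expPartialSum (m + 1) (-z))
      (expPartialSum m x * expPartialSum (m + 1) (-x)
        - expPartialSum (m + 1) x * expPartialSum m (-x)) x := by
  have hneg : HasDerivAt (fun z => expPartialSum (m + 1) (-z)) (expPartialSum m (-x) * -1) x :=
    (hasDerivAt_succ m (-x)).comp x (hasDerivAt_neg x)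
  refine ((hasDerivAt_succ m x).mul hneg).congr_deriv ?_
  ring

lemma monotoneOn_mul_neg (n : ℕ) :
    MonotoneOn (fun x => expPartialSum (2 * n + 1) x * expPartialSum (2 * n + 1) (-x))
      (Set.Ici 0) := by
  refine monotoneOn_of_hasDerivWithinAt_nonneg (convex_Ici 0)
    (fun x _ => (hasDerivAt_mul_neg (2 * n) x).continuousAt.continuousWithinAt)
    (fun x _ => (hasDerivAt_mul_neg (2 * n) x).hasDerivWithinAt) fun x hx => ?_
  rw [interior_Ici, Set.mem_Ioi] at hx
  have hderiv : expPartialSum (2 * n) x * expPartialSum (2 * n + 1) (-x)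
      - expPartialSum (2 * n + 1) x * expPartialSum (2 * n) (-x)
      = x ^ (2 * n) / ((2 * n).factorial : ℝ)
        * (expPartialSum (2 * n) x - expPartialSum (2 * n) (-x)) := by
    rw [succ, succ, (even_two_mul n).neg_pow]
    ring
  rw [hderiv]
  exact mul_nonneg (by positivity) (sub_nonneg.mpr (neg_le hx.le _))

lemma one_le_mul_neg (n : ℕ) (x : ℝ) :
    1 ≤ expPartialSum (2 * n + 1) x * expPartialSum (2 * n + 1) (-x) := by
  wlog hx : 0 ≤ x generalizing x
  · simpa [mul_comm] using this (-x) (by linarith)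
  simpa [succ_zero] using monotoneOn_mul_neg n Set.self_mem_Ici hx hx

end expPartialSum

lemma one_le_Efun_mul_neg (y x : ℝ) : 1 ≤ Efun y x * Efun y (-x) :=
  expPartialSum.one_le_mul_neg ⌈y⌉₊ x

theorem N_product_ge_one_general (k : ℝ) :
    ∃ M₀ : ℕ, ∀ M : ℕ, M₀ ≤ M → ∃ X₀ : ℝ, ∀ X : ℝ, X₀ ≤ X →
      ∀ p : ℕ, p.Prime → p ≠ 2 → ∀ a : ℝ,
        1 ≤ NNfun k M X p a * NNfun k M X p (-a) := by
  refine ⟨0, fun M _ => ⟨0, fun X _ p _ _ a => ?_⟩⟩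
  rw [NNfun, NNfun, ← prod_mul_distrib]
  refine one_le_prod fun i _ => ?_
  simpa only [Nfun, neg_mul] using one_le_Efun_mul_neg _ (a * Pfun X p i)

/-- For every real `a`, large `X` and odd prime `p`, `𝓝(p, a) 𝓝(p, −a) ≥ 1`. -/
theorem N_product_ge_one (k : ℝ) (hk0 : 0 < k) (hkne : k ≠ 1 / 2) :
    ∃ M₀ : ℕ, ∀ M : ℕ, M₀ ≤ M → ∃ X₀ : ℝ, ∀ X : ℝ, X₀ ≤ X →
      ∀ p : ℕ, p.Prime → p ≠ 2 → ∀ a : ℝ,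
        1 ≤ NNfun k M X p a * NNfun k M X p (-a) :=
  N_product_ge_one_general k
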